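/- arXiv:2604.15152 — 5 statements merged into one kernel-verified Lean document; each statement's English description precedes it below -/
import Mathlib

section
/- For integers 0 ≤ r ≤ n with n ≥ 1, define φ_n(r) = (n^r - n(n-1)···(n-r+1))/n^{r-1} and φ*_n(r) = n(r(r-1)/2 - φ_n(r)). Then 0 ≤ φ*_n(r) ≤ r^4. -/
/-!
With `P = ∏_{i<r} (1 - i/n) = n(n-1)⋯(n-r+1)/n^r` and `S = ∑_{i<r} i/n = r(r-1)/(2n)`, one has
`φ_n(r) = n(1 - P)` and hence `φ*_n(r) = n²(P - (1 - S))`. The two inequalities are then the first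
two Bonferroni-type bounds `1 - S ≤ P ≤ 1 - S + S²/2` for a product of factors `1 - aᵢ` with
`aᵢ ∈ [0, 1]`, and `n²S²/2 = (r(r-1))²/8 ≤ r⁴`.
-/

open Finset

namespace Finset

variable {ι K : Type*}

theorem one_sub_sum_le_prod_one_sub [CommRing K] [LinearOrder K] [IsStrictOrderedRing K]
    (s : Finset ι) {a : ι → K} (ha : ∀ i ∈ s, a i ∈ Set.Icc 0 1) :
    1 - ∑ i ∈ s, a i ≤ ∏ i ∈ s, (1 - a i) := by
  classical
  induction s using Finset.induction_on with
  | empty => simp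
  | insert j s hj ih =>
    rw [sum_insert hj, prod_insert hj]
    have ih := ih fun i hi => ha i (mem_insert_of_mem hi)
    have hS : 0 ≤ ∑ i ∈ s, a i := sum_nonneg fun i hi => (ha i (mem_insert_of_mem hi)).1
    obtain ⟨haj0, haj1⟩ := ha j (mem_insert_self j s)
    nlinarith [mul_le_mul_of_nonneg_left ih (sub_nonneg.2 haj1)]

theorem prod_one_sub_le [Field K] [LinearOrder K] [IsStrictOrderedRing K]
    (s : Finset ι) {a : ι → K} (ha : ∀ i ∈ s, a i ∈ Set.Icc 0 1) :
    ∏ i ∈ s, (1 - a i) ≤ 1 - ∑ i ∈ s, a i + (∑ i ∈ s, a i) ^ 2 / 2 := by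
  classical
  induction s using Finset.induction_on with
  | empty => simp
  | insert j s hj ih =>
    rw [sum_insert hj, prod_insert hj]
    have ha' : ∀ i ∈ s, a i ∈ Set.Icc 0 1 := fun i hi => ha i (mem_insert_of_mem hi)
    obtain ⟨haj0, haj1⟩ := ha j (mem_insert_self j s)
    -- the lower bound gives `a j * P ≥ a j * (1 - S)` for the new factor
    nlinarith [mul_le_mul_of_nonneg_left (ih ha') (sub_nonneg.2 haj1),
      mul_le_mul_of_nonneg_left (one_sub_sum_le_prod_one_sub s ha') haj0]

end Finset

namespace Nat

variable {K : Type*} [Field K] [CharZero K]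

theorem cast_descFactorial_div_pow {n r : ℕ} (hn : n ≠ 0) (hr : r ≤ n) :
    (n.descFactorial r : K) / (n : K) ^ r = ∏ i ∈ range r, (1 - (i : K) / n) := by
  have hpow : (n : K) ^ r = ∏ _i ∈ range r, (n : K) := by simp
  rw [descFactorial_eq_prod_range, Nat.cast_prod, hpow, ← prod_div_distrib]
  refine prod_congr rfl fun i hi => ?_
  rw [Nat.cast_sub (by linarith [mem_range.1 hi]), sub_div, div_self (Nat.cast_ne_zero.2 hn)]

theorem sum_range_cast_id (r : ℕ) : ∑ i ∈ range r, (i : K) = r * (r - 1) / 2 := by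
  rw [← Nat.cast_sum, sum_range_id, ← choose_two_right, cast_choose_two]

end Nat

theorem stmt_1 (n r : ℕ) (hn : 1 ≤ n) (hr : r ≤ n)
    (φ φs : ℝ)
    (hφ : φ = ((n : ℝ) ^ r - (n.descFactorial r : ℝ)) / (n : ℝ) ^ (r - 1))
    (hφs : φs = (n : ℝ) * ((r : ℝ) * ((r : ℝ) - 1) / 2 - φ)) :
    0 ≤ φs ∧ φs ≤ (r : ℝ) ^ 4 := by
  have hn0 : (n : ℝ) ≠ 0 := by positivity
  set P := ∏ i ∈ range r, (1 - (i : ℝ) / n) with hP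
  set S := ∑ i ∈ range r, (i : ℝ) / n with hS_def
  have ha : ∀ i ∈ range r, (i : ℝ) / n ∈ Set.Icc 0 1 := fun i hi =>
    ⟨by positivity, div_le_one_of_le₀ (by exact_mod_cast (mem_range.1 hi).le.trans hr) (by positivity)⟩
  have hS : n * S = r * (r - 1) / 2 := by
    rw [hS_def, ← sum_div, Nat.sum_range_cast_id]; field_simp
  have hφ' : φ = n * (1 - P) := by
    rw [hφ, hP, ← Nat.cast_descFactorial_div_pow (by omega) hr]
    rcases r with _ | r
    · simp
    · rw [Nat.add_sub_cancel]; field_simp; ring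
  have hφs' : φs = n ^ 2 * (P - (1 - S)) := by
    rw [hφs, hφ', ← hS]; ring
  refine ⟨?_, ?_⟩
  · rw [hφs']
    exact mul_nonneg (sq_nonneg _) (sub_nonneg.2 (one_sub_sum_le_prod_one_sub _ ha))
  · have hr1 : (0 : ℝ) ≤ r * (r - 1) := Nat.cast_descFactorial_two ℝ r ▸ Nat.cast_nonneg _
    calc φs ≤ n ^ 2 * (S ^ 2 / 2) := by
          rw [hφs']; gcongr; linarith [prod_one_sub_le _ ha]
      _ = (r * (r - 1) / 2) ^ 2 / 2 := by rw [← hS]; ring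
      _ ≤ r ^ 4 := by nlinarith
end

section
/- For integers 0 ≤ r ≤ n with n ≥ 1, φ_n(r) = Σ_{k=1}^{r-1} k · n^{1-k} (n-1)(n-2)···(n-k+1), where φ_n(r) = (n^r - n(n-1)···(n-r+1))/n^{r-1}. -/
/-!
The ratios `a k = n↓k / n ^ k` satisfy `a k - a (k + 1) = k * a k / n`, because
`n↓(k + 1) = (n - k) * n↓k`. Summing this telescopes to `1 - a r`, and
`a k = (n - 1)↓(k - 1) / n ^ (k - 1)` turns the summands into the ones of the statement.
-/

open Finset

namespace Nat

/-- Unlike `Nat.descFactorial_succ`, this holds with ring subtraction: both sides vanish when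
`n < k`. -/
theorem cast_descFactorial_succ {R : Type*} [CommRing R] (n k : ℕ) :
    (n.descFactorial (k + 1) : R) = ((n : R) - k) * n.descFactorial k := by
  rcases le_or_gt k n with hkn | hnk
  · rw [descFactorial_succ, cast_mul, cast_sub hkn]
  · rw [descFactorial_eq_zero_iff_lt.mpr hnk, descFactorial_eq_zero_iff_lt.mpr (by omega),
      cast_zero, mul_zero]

theorem descFactorial_eq_mul_sub_one_descFactorial (n : ℕ) {k : ℕ} (hk : 1 ≤ k) :
    n.descFactorial k = n * (n - 1).descFactorial (k - 1) := by
  obtain ⟨j, rfl⟩ : ∃ j, k = j + 1 := ⟨k - 1, by omega⟩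
  rcases n with _ | m
  · simp
  · simp only [Nat.add_sub_cancel, succ_descFactorial_succ]

end Nat

section Telescoping

variable {K : Type*} [Field K] {n : ℕ}

theorem descFactorial_div_pow_sub_succ (hn : (n : K) ≠ 0) (k : ℕ) :
    (n.descFactorial k : K) / (n : K) ^ k - n.descFactorial (k + 1) / (n : K) ^ (k + 1) =
      k * n.descFactorial k / (n : K) ^ (k + 1) := by
  rw [Nat.cast_descFactorial_succ]
  field_simp
  ring

theorem sum_range_mul_descFactorial_div_pow_succ (hn : (n : K) ≠ 0) (r : ℕ) :
    ∑ k ∈ range r, (k : K) * n.descFactorial k / (n : K) ^ (k + 1) =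
      1 - n.descFactorial r / (n : K) ^ r := by
  induction r with
  | zero => simp
  | succ r ih => rw [sum_range_succ, ih, ← descFactorial_div_pow_sub_succ hn]; ring

end Telescoping

theorem stmt_2_general (n r : ℕ) (hn : 1 ≤ n) :
    ((n : ℝ) ^ r - (n.descFactorial r : ℝ)) / (n : ℝ) ^ (r - 1) =
      ∑ k ∈ Finset.Icc 1 (r - 1),
        (k : ℝ) * (((n - 1).descFactorial (k - 1) : ℝ)) / (n : ℝ) ^ (k - 1) := by
  have hn0 : (n : ℝ) ≠ 0 := by positivity
  rcases r with _ | s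
  · simp
  have summand (k : ℕ) (hk : k ∈ Icc 1 s) :
      (k : ℝ) * ((n - 1).descFactorial (k - 1) : ℝ) / (n : ℝ) ^ (k - 1) =
        n * ((k : ℝ) * n.descFactorial k / (n : ℝ) ^ (k + 1)) := by
    obtain ⟨j, rfl⟩ := exists_add_of_le (mem_Icc.mp hk).1
    rw [Nat.descFactorial_eq_mul_sub_one_descFactorial n (by omega)]
    push_cast
    field_simp
    simp only [Nat.add_sub_cancel_left]
    ring
  have shift : ∑ k ∈ Icc 1 s, (k : ℝ) * n.descFactorial k / (n : ℝ) ^ (k + 1) =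
      ∑ k ∈ range (s + 1), (k : ℝ) * n.descFactorial k / (n : ℝ) ^ (k + 1) := by
    rw [range_eq_Ico, sum_eq_sum_Ico_succ_bot (by omega)]
    simp [Ico_add_one_right_eq_Icc]
  rw [Nat.add_sub_cancel, sum_congr rfl summand, ← mul_sum, shift,
    sum_range_mul_descFactorial_div_pow_succ hn0]
  field_simp
  ring

theorem stmt_2 (n r : ℕ) (hn : 1 ≤ n) (hr : r ≤ n) :
    ((n : ℝ) ^ r - (n.descFactorial r : ℝ)) / (n : ℝ) ^ (r - 1) =
      ∑ k ∈ Finset.Icc 1 (r - 1),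
        (k : ℝ) * (((n - 1).descFactorial (k - 1) : ℝ)) / (n : ℝ) ^ (k - 1) :=
  stmt_2_general n r hn
end

section
/- For integers n ≥ 1, 0 ≤ r ≤ n and real x with 0 ≤ x ≤ n/2, define δ_n(r,x) = n((1 - x/n)^{n-r} - e^{-x}). Then -2 ≤ δ_n(r,x) ≤ r · 2^{r-1}. -/
/-!
Put `t = x / n ∈ [0, 1/2]`, so that `e^{-x} = (e^{-t})^n` and `0 ≤ 1 - t ≤ e^{-t}`.

Lower bound: `(1 - t)^{n-r} ≥ (1 - t)^n`, and by the mean value bound for `a^n - b^n`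
together with `e^{-t} - (1 - t) ≤ t²`, `n (e^{-x} - (1 - t)^n) ≤ x² e^{-x} e^t ≤ 1 · 2`.

Upper bound: `(1 - t)^{n-r} ≤ e^{-x} e^{rt}` and `e^{rt} - 1 ≤ rt e^{rt}`, so
`δ ≤ r (x e^{-x}) e^{rt} ≤ r e^{r/2 - 1} ≤ r 2^{r-1}`, using `x e^{-x} ≤ e^{-1}` and `e^{1/2} ≤ 2`.
-/

open Real

namespace Real

lemma exp_half_le_two : exp (1 / 2) ≤ 2 := by
  have h : exp (1 / 2) ^ 2 = exp 1 := by rw [← exp_nat_mul]; norm_num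
  nlinarith [exp_one_lt_three, exp_pos (1 / 2)]

lemma sq_mul_exp_neg_le_one {x : ℝ} (hx : 0 ≤ x) : x ^ 2 * exp (-x) ≤ 1 := by
  have half : x / 2 * exp (-(x / 2)) ≤ exp (-1) := mul_exp_neg_le_exp_neg_one _
  have two_le_exp_one : 2 ≤ exp 1 := by linarith [add_one_le_exp 1]
  calc x ^ 2 * exp (-x) = 4 * (x / 2 * exp (-(x / 2))) ^ 2 := by
        rw [mul_pow, ← exp_nat_mul]; ring_nf
    _ ≤ 4 * exp (-1) ^ 2 := by gcongr
    _ = (2 / exp 1) ^ 2 := by rw [exp_neg]; ring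
    _ ≤ 1 := by
        rw [sq_le_one_iff₀ (by positivity)]
        exact (div_le_one (exp_pos 1)).mpr two_le_exp_one

lemma exp_sub_one_le_mul_exp (s : ℝ) : exp s - 1 ≤ s * exp s := by
  have h := add_one_le_exp (-s)
  have : exp s * exp (-s) = 1 := by rw [← exp_add]; simp
  nlinarith [exp_pos s]

lemma exp_neg_sub_one_sub_le_sq {t : ℝ} (ht0 : 0 ≤ t) (ht1 : t ≤ 1) :
    exp (-t) - (1 - t) ≤ t ^ 2 := by
  have h := abs_exp_sub_one_sub_id_le (x := -t) (by rw [abs_neg, abs_of_nonneg ht0]; exact ht1)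
  rw [neg_sq] at h
  linarith [(abs_le.mp h).2]

end Real

lemma mul_exp_neg_mul_sub_one_sub_pow_le (n : ℕ) {t : ℝ} (ht0 : 0 ≤ t) (ht : t ≤ 1 / 2) :
    n * (exp (-(n * t)) - (1 - t) ^ n) ≤ 2 := by
  obtain _ | n := n
  · simp
  have hb : 0 ≤ 1 - t := by linarith
  have hdiff : exp (-t) ^ (n + 1) - (1 - t) ^ (n + 1) ≤ t ^ 2 * (n + 1) * exp (-t) ^ n := by
    have h := abs_pow_sub_pow_le (exp (-t)) (1 - t) (n + 1)
    rw [abs_of_nonneg (sub_nonneg.mpr (one_sub_le_exp_neg t)), abs_of_nonneg (exp_pos _).le,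
      abs_of_nonneg hb, max_eq_left (one_sub_le_exp_neg t)] at h
    push_cast at h
    refine (le_abs_self _).trans (h.trans ?_)
    gcongr
    exact exp_neg_sub_one_sub_le_sq ht0 (by linarith)
  have hpow : exp (-t) ^ n = exp (-((n + 1 : ℕ) * t)) * exp t := by
    rw [← exp_nat_mul, ← exp_add]; push_cast; ring_nf
  calc ((n + 1 : ℕ) : ℝ) * (exp (-((n + 1 : ℕ) * t)) - (1 - t) ^ (n + 1))
      = (n + 1 : ℕ) * (exp (-t) ^ (n + 1) - (1 - t) ^ (n + 1)) := by rw [← exp_nat_mul]; ring_nf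
    _ ≤ (n + 1 : ℕ) * (t ^ 2 * (n + 1) * exp (-t) ^ n) := by gcongr
    _ = ((n + 1 : ℕ) * t) ^ 2 * exp (-((n + 1 : ℕ) * t)) * exp t := by rw [hpow]; push_cast; ring
    _ ≤ 1 * 2 := by
        gcongr
        · exact sq_mul_exp_neg_le_one (by positivity)
        · exact exp_half_le_two.trans' (exp_le_exp.mpr ht)
    _ = 2 := one_mul 2

lemma mul_one_sub_pow_sub_exp_neg_mul_le {n r : ℕ} (hr : r ≤ n) {t : ℝ} (ht : t ≤ 1 / 2) :
    n * ((1 - t) ^ (n - r) - exp (-(n * t))) ≤ r * exp (r / 2 - 1) := by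
  have hpow : (1 - t) ^ (n - r) ≤ exp (-(n * t)) * exp (r * t) := by
    calc (1 - t) ^ (n - r) ≤ exp (-t) ^ (n - r) :=
          pow_le_pow_left₀ (by linarith) (one_sub_le_exp_neg t) _
      _ = exp (-(n * t)) * exp (r * t) := by
          rw [← exp_nat_mul, ← exp_add, Nat.cast_sub hr]; ring_nf
  have hrt : exp (r * t) ≤ exp (r / 2) := exp_le_exp.mpr (by nlinarith)
  calc (n : ℝ) * ((1 - t) ^ (n - r) - exp (-(n * t)))
      ≤ n * (exp (-(n * t)) * (exp (r * t) - 1)) := by gcongr; linarith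
    _ ≤ n * (exp (-(n * t)) * (r * t * exp (r * t))) := by
        gcongr; exact exp_sub_one_le_mul_exp _
    _ = r * (n * t * exp (-(n * t))) * exp (r * t) := by ring
    _ ≤ r * exp (-1) * exp (r / 2) := by
        gcongr
        exact mul_exp_neg_le_exp_neg_one _
    _ = r * exp (r / 2 - 1) := by rw [mul_assoc, ← exp_add]; ring_nf

lemma natCast_mul_exp_half_sub_one_le (r : ℕ) : r * exp (r / 2 - 1) ≤ r * 2 ^ (r - 1) := by
  obtain _ | r := r
  · simp
  gcongr
  calc exp ((r + 1 : ℕ) / 2 - 1) ≤ exp (r * (1 / 2)) := by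
        apply exp_le_exp.mpr; push_cast; linarith
    _ = exp (1 / 2) ^ r := exp_nat_mul _ _
    _ ≤ 2 ^ (r + 1 - 1) := by
        rw [Nat.add_sub_cancel]; gcongr; exact exp_half_le_two

theorem stmt_6 (n r : ℕ) (hn : 1 ≤ n) (hr : r ≤ n) (x : ℝ) (hx0 : 0 ≤ x)
    (hx : x ≤ (n : ℝ) / 2)
    (δ : ℝ) (hδ : δ = (n : ℝ) * ((1 - x / (n : ℝ)) ^ (n - r) - Real.exp (-x))) :
    -2 ≤ δ ∧ δ ≤ (r : ℝ) * 2 ^ (r - 1) := by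
  have hn0 : (0 : ℝ) < n := by exact_mod_cast hn
  set t := x / n
  have ht0 : 0 ≤ t := by positivity
  have ht : t ≤ 1 / 2 := by rw [div_le_iff₀ hn0]; linarith
  have hxt : x = n * t := (mul_div_cancel₀ x hn0.ne').symm
  rw [hδ, hxt]
  constructor
  · have hmono : (1 - t) ^ n ≤ (1 - t) ^ (n - r) :=
      pow_le_pow_of_le_one (by linarith) (by linarith) (Nat.sub_le n r)
    calc -2 ≤ (n : ℝ) * ((1 - t) ^ n - exp (-(n * t))) := by
          linarith [mul_exp_neg_mul_sub_one_sub_pow_le n ht0 ht]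
      _ ≤ n * ((1 - t) ^ (n - r) - exp (-(n * t))) := by gcongr
  · exact (mul_one_sub_pow_sub_exp_neg_mul_le hr ht).trans (natCast_mul_exp_half_sub_one_le r)
end

section
/- For real x with 0 ≤ x ≤ n/2 (integer n ≥ 1) one has e^{-x}(1 - x²/(2n) - 8x³/(3n²)) ≤ (1 - x/n)^n ≤ e^{-x}(1 - x²/(2n)) + x⁴/(4n²). -/
/-!
With `t = x / n ≤ 1 / 2`, the Taylor expansion of the logarithm gives
`-t - t²/2 - t³/(1 - t) ≤ log (1 - t) ≤ -t - t²/2`, so `(1 - x/n)^n = exp (n log (1 - x/n))` lies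
between `exp (-x - x²/(2n) - 8x³/(3n²))` and `exp (-x - x²/(2n))`. Splitting off `exp (-x)` and
using `1 - a ≤ exp (-a) ≤ 1 - a + a²/2` turns these into the two polynomial corrections.
-/

open Real Finset

lemma log_one_sub_le_neg_sub_sq_div_two {t : ℝ} (h0 : 0 ≤ t) (h1 : t < 1) :
    log (1 - t) ≤ -t - t ^ 2 / 2 := by
  have hsum := hasSum_pow_div_log_of_abs_lt_one (by rwa [abs_of_nonneg h0])
  have hpartial := sum_le_hasSum (range 2) (fun i _ => by positivity) hsum
  norm_num [sum_range_succ] at hpartial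
  linarith

lemma neg_sub_sq_div_two_sub_le_log_one_sub {t : ℝ} (h0 : 0 ≤ t) (h1 : t < 1) :
    -t - t ^ 2 / 2 - t ^ 3 / (1 - t) ≤ log (1 - t) := by
  have h := abs_log_sub_add_sum_range_le (by rwa [abs_of_nonneg h0]) 2
  rw [abs_of_nonneg h0] at h
  norm_num [sum_range_succ] at h
  linarith [(abs_le.mp h).1]

lemma exp_neg_le_one_sub_add_sq_div_two {a : ℝ} (ha : 0 ≤ a) :
    exp (-a) ≤ 1 - a + a ^ 2 / 2 := by
  rw [exp_neg, inv_le_iff_one_le_mul₀' (exp_pos a)]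
  calc (1 : ℝ) ≤ (1 + a + a ^ 2 / 2) * (1 - a + a ^ 2 / 2) := by nlinarith [pow_nonneg ha 4]
    _ ≤ exp a * (1 - a + a ^ 2 / 2) := by
      gcongr
      · nlinarith [sq_nonneg (a - 1)]
      · exact quadratic_le_exp_of_nonneg ha

lemma natCast_mul_log_one_sub_div_le {n : ℕ} (hn : 0 < n) {x : ℝ} (hx0 : 0 ≤ x) (hx : x < n) :
    n * log (1 - x / n) ≤ -x - x ^ 2 / (2 * n) := by
  have hn' : (0 : ℝ) < n := by exact_mod_cast hn
  have h := log_one_sub_le_neg_sub_sq_div_two (t := x / n) (by positivity) (by rwa [div_lt_one hn'])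
  calc n * log (1 - x / n) ≤ n * (-(x / n) - (x / n) ^ 2 / 2) := by gcongr
    _ = -x - x ^ 2 / (2 * n) := by field_simp

lemma le_natCast_mul_log_one_sub_div {n : ℕ} (hn : 0 < n) {x : ℝ} (hx0 : 0 ≤ x)
    (hx : x ≤ n / 2) :
    -x - x ^ 2 / (2 * n) - 8 * x ^ 3 / (3 * n ^ 2) ≤ n * log (1 - x / n) := by
  have hn' : (0 : ℝ) < n := by exact_mod_cast hn
  set t := x / n with ht
  have ht0 : 0 ≤ t := by positivity
  have ht1 : t ≤ 1 / 2 := by rw [ht, div_le_iff₀ hn']; linarith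
  have h := neg_sub_sq_div_two_sub_le_log_one_sub ht0 (by linarith)
  have hcube : t ^ 3 / (1 - t) ≤ 8 * t ^ 3 / 3 := by
    rw [div_le_iff₀ (by linarith)]; nlinarith [pow_nonneg ht0 3]
  calc -x - x ^ 2 / (2 * n) - 8 * x ^ 3 / (3 * n ^ 2) = n * (-t - t ^ 2 / 2 - 8 * t ^ 3 / 3) := by
        rw [ht]; field_simp
    _ ≤ n * log (1 - t) := by gcongr; linarith

theorem stmt_9 (n : ℕ) (hn : 1 ≤ n) (x : ℝ) (hx0 : 0 ≤ x) (hx : x ≤ (n : ℝ) / 2) :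
    Real.exp (-x) * (1 - x ^ 2 / (2 * (n : ℝ)) - 8 * x ^ 3 / (3 * (n : ℝ) ^ 2))
        ≤ (1 - x / (n : ℝ)) ^ n ∧
      (1 - x / (n : ℝ)) ^ n
        ≤ Real.exp (-x) * (1 - x ^ 2 / (2 * (n : ℝ))) + x ^ 4 / (4 * (n : ℝ) ^ 2) := by
  have hn' : (0 : ℝ) < n := by exact_mod_cast hn
  have hpow : (1 - x / n) ^ n = exp (n * log (1 - x / n)) := by
    rw [exp_nat_mul, exp_log (by rw [sub_pos, div_lt_one hn']; linarith)]
  have hlb := le_natCast_mul_log_one_sub_div hn hx0 hx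
  have hub := natCast_mul_log_one_sub_div_le hn hx0 (by linarith)
  set a := x ^ 2 / (2 * n) with ha
  set b := 8 * x ^ 3 / (3 * n ^ 2)
  rw [hpow]
  constructor
  · calc exp (-x) * (1 - a - b) ≤ exp (-x) * exp (-a - b) := by
          gcongr; linarith [add_one_le_exp (-a - b)]
      _ = exp (-x - a - b) := by rw [← exp_add]; ring_nf
      _ ≤ _ := exp_le_exp.mpr hlb
  · have ha0 : 0 ≤ a := by positivity
    have hsq : a ^ 2 / 2 ≤ x ^ 4 / (4 * n ^ 2) := by
      rw [ha]; field_simp; nlinarith [pow_nonneg hx0 4]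
    have hex1 : exp (-x) ≤ 1 := exp_le_one_iff.mpr (by linarith)
    calc exp (n * log (1 - x / n)) ≤ exp (-x - a) := exp_le_exp.mpr hub
      _ = exp (-x) * exp (-a) := by rw [← exp_add]; ring_nf
      _ ≤ exp (-x) * (1 - a + a ^ 2 / 2) := by gcongr; exact exp_neg_le_one_sub_add_sq_div_two ha0
      _ ≤ exp (-x) * (1 - a) + a ^ 2 / 2 := by nlinarith [exp_pos (-x), sq_nonneg a]
      _ ≤ _ := by linarith
end

section
/- Equiprobable allocation: n balls uniformly into N boxes with N ≥ 4, α = n/N, q̂_0 the proportion of empty boxes. Then -(α² + 11α + 12)/n² ≤ V[q̂_0] - (α e^{-α} - α e^{-2α} - α² e^{-2α})/n ≤ 8/n². -/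
/-- Expectation under the multinomial allocation model: `n` balls land independently,
ball landing in box `k` with probability `q k`. -/
noncomputable def allocExp (N n : ℕ) (q : Fin N → ℝ) (f : (Fin n → Fin N) → ℝ) : ℝ :=
  ∑ ω : Fin n → Fin N, (∏ i, q (ω i)) * f ω

/-- Number of balls in box `k` under allocation `ω`. -/
def boxLoad {N n : ℕ} (ω : Fin n → Fin N) (k : Fin N) : ℕ :=
  (Finset.univ.filter fun i => ω i = k).card

/-- Number of boxes containing exactly `r` balls. -/
def NhatBoxes {N n : ℕ} (ω : Fin n → Fin N) (r : ℕ) : ℕ :=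
  (Finset.univ.filter fun k => boxLoad ω k = r).card

/-- Poisson weight `p_r(x) = x^r e^{-x}/r!`. -/
noncomputable def poissonP (r : ℕ) (x : ℝ) : ℝ := x ^ r * Real.exp (-x) / r.factorial

/-- Variance under the multinomial allocation model. -/
noncomputable def allocVar (N n : ℕ) (q : Fin N → ℝ) (f : (Fin n → Fin N) → ℝ) : ℝ :=
  allocExp N n q (fun ω => (f ω - allocExp N n q f) ^ 2)

/-!
With `p = 1/N`, counting the allocations that avoid one or two given boxes gives
`E q̂₀ = (1-p)^n` and `E q̂₀² = p (1-p)^n + (1-p)(1-2p)^n`, hence the exact variance.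
Its distance to the Poisson approximation splits as
`p ((1-p)^n - e^{-α}) + p (e^{-2α} - (1-2p)^n) + (n p² e^{-2α} - ((1-p)^{2n} - (1-2p)^n))`.
The first two terms are controlled by `e^{-x-x²} ≤ 1 - x ≤ e^{-x}`, the last by the mean
value bounds `n b^{n-1} (a-b) ≤ a^n - b^n ≤ n a^{n-1} (a-b)` for `a = (1-p)²`, `b = 1-2p`,
where `a - b = p²`.
All three are `O(α³ e^{-α} / n²)`, and `x³ e^{-x}`, `x³ (1+x) e^{-2x}` are bounded.
-/

open Finset

section Occupancy

variable {N n : ℕ}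

lemma card_filter_forall_notMem (t : Finset (Fin N)) :
    (#{ω : Fin n → Fin N | ∀ i, ω i ∉ t} : ℝ) = ((N : ℝ) - #t) ^ n := by
  have hpi : ({ω : Fin n → Fin N | ∀ i, ω i ∉ t} : Finset _) =
      Fintype.piFinset fun _ => tᶜ := by
    ext ω; simp [Fintype.mem_piFinset]
  rw [hpi, Fintype.card_piFinset, prod_const, card_univ, Fintype.card_fin, card_compl,
    Fintype.card_fin, Nat.cast_pow, Nat.cast_sub (by simpa using t.card_le_univ)]

lemma natCast_NhatBoxes_zero (ω : Fin n → Fin N) :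
    (NhatBoxes ω 0 : ℝ) = ∑ k, if ∀ i, ω i ∉ ({k} : Finset (Fin N)) then 1 else 0 := by
  simp [NhatBoxes, boxLoad, filter_eq_empty_iff]

lemma sum_NhatBoxes_zero :
    ∑ ω : Fin n → Fin N, (NhatBoxes ω 0 : ℝ) = N * ((N : ℝ) - 1) ^ n := by
  simp_rw [natCast_NhatBoxes_zero]
  rw [sum_comm]
  simp_rw [sum_boole, card_filter_forall_notMem, card_singleton]
  simp

lemma sum_NhatBoxes_zero_sq :
    ∑ ω : Fin n → Fin N, (NhatBoxes ω 0 : ℝ) ^ 2 =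
      N * ((N : ℝ) - 1) ^ n + N * ((N : ℝ) - 1) * ((N : ℝ) - 2) ^ n := by
  have hsq (ω : Fin n → Fin N) : (NhatBoxes ω 0 : ℝ) ^ 2 =
      ∑ k, ∑ l, if ∀ i, ω i ∉ ({k, l} : Finset (Fin N)) then 1 else 0 := by
    rw [natCast_NhatBoxes_zero, sq, sum_mul_sum]
    refine sum_congr rfl fun k _ => sum_congr rfl fun l _ => ?_
    simp only [mem_insert, mem_singleton, not_or, forall_and, ite_zero_mul_ite_zero, mul_one]
  have hpair (k : Fin N) : ∑ l, ((N : ℝ) - #({k, l} : Finset (Fin N))) ^ n =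
      ((N : ℝ) - 1) ^ n + ((N : ℝ) - 1) * ((N : ℝ) - 2) ^ n := by
    have hcard (l) (hl : l ∈ ({k}ᶜ : Finset (Fin N))) : #({k, l} : Finset (Fin N)) = 2 :=
      card_pair_eq_two_iff.2 (by simpa [eq_comm] using hl)
    rw [Fintype.sum_eq_add_sum_compl k, pair_eq_singleton, card_singleton,
      sum_congr rfl fun l hl => by rw [hcard l hl]]
    simp only [sum_const, card_compl, Fintype.card_fin, card_singleton, nsmul_eq_mul]
    push_cast [Nat.cast_sub (Fin.pos k)]
    ring
  simp_rw [hsq]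
  rw [sum_comm]
  simp_rw [sum_comm (s := (univ : Finset (Fin n → Fin N))), sum_boole, card_filter_forall_notMem,
    hpair, sum_const, card_univ, Fintype.card_fin, nsmul_eq_mul]
  ring

end Occupancy

/-- The exact variance of the proportion of empty boxes, with `p = 1 / N`. -/
noncomputable def emptyProportionVar (n : ℕ) (p : ℝ) : ℝ :=
  p * (1 - p) ^ n + (1 - p) * (1 - 2 * p) ^ n - (1 - p) ^ (2 * n)

/-- `(α e^{-α} - α e^{-2α} - α² e^{-2α}) / n` with `α = n p`. -/
noncomputable def emptyProportionVarApprox (n : ℕ) (p : ℝ) : ℝ :=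
  p * Real.exp (-(n * p)) - p * Real.exp (-2 * (n * p)) - n * p ^ 2 * Real.exp (-2 * (n * p))

section Allocation

variable {N n : ℕ}

lemma sum_prod_eq_one {q : Fin N → ℝ} (hq : ∑ k, q k = 1) :
    ∑ ω : Fin n → Fin N, ∏ i, q (ω i) = 1 := by
  rw [← Fintype.prod_sum (fun _ : Fin n => q), hq, prod_const_one]

lemma allocVar_eq_sub_sq {q : Fin N → ℝ} (hq : ∑ k, q k = 1) (f : (Fin n → Fin N) → ℝ) :
    allocVar N n q f = allocExp N n q (fun ω => f ω ^ 2) - allocExp N n q f ^ 2 := by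
  have hexpand (c : ℝ) : allocExp N n q (fun ω => (f ω - c) ^ 2) =
      allocExp N n q (fun ω => f ω ^ 2) - 2 * c * allocExp N n q f +
        c ^ 2 * ∑ ω : Fin n → Fin N, ∏ i, q (ω i) := by
    simp only [allocExp, mul_sum, ← sum_sub_distrib, ← sum_add_distrib]
    exact sum_congr rfl fun ω _ => by ring
  rw [allocVar, hexpand, sum_prod_eq_one hq]
  ring

lemma allocExp_uniform (f : (Fin n → Fin N) → ℝ) :
    allocExp N n (fun _ => 1 / (N : ℝ)) f = (∑ ω, f ω) / (N : ℝ) ^ n := by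
  simp [allocExp, prod_const, div_eq_inv_mul, mul_sum]

lemma allocExp_emptyProportion (hN : N ≠ 0) :
    allocExp N n (fun _ => 1 / (N : ℝ)) (fun ω => (NhatBoxes ω 0 : ℝ) / N) =
      (1 - 1 / (N : ℝ)) ^ n := by
  rw [allocExp_uniform, ← sum_div, sum_NhatBoxes_zero, one_sub_div (by simpa), div_pow]
  field_simp

lemma allocVar_emptyProportion (hN : N ≠ 0) :
    allocVar N n (fun _ => 1 / (N : ℝ)) (fun ω => (NhatBoxes ω 0 : ℝ) / N) =
      emptyProportionVar n (1 / N) := by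
  rw [emptyProportionVar, mul_one_div, allocVar_eq_sub_sq (by simp [hN]),
    allocExp_emptyProportion hN, allocExp_uniform]
  have hN' : (N : ℝ) ≠ 0 := by simpa
  simp_rw [div_pow, ← sum_div, sum_NhatBoxes_zero_sq, one_sub_div hN', div_pow, pow_mul']
  field_simp

end Allocation

section PoissonApproximation

open Real

variable {n : ℕ} {x : ℝ}

lemma one_sub_pow_le_exp_neg_mul (hx : x ≤ 1) : (1 - x) ^ n ≤ exp (-(n * x)) := by
  rw [neg_mul_eq_mul_neg, exp_nat_mul]
  gcongr
  linarith [add_one_le_exp (-x)]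

lemma exp_neg_sub_sq_le_one_sub (h0 : 0 ≤ x) (h1 : x ≤ 1 / 2) : exp (-x - x ^ 2) ≤ 1 - x := by
  have hquad := quadratic_le_exp_of_nonneg (show 0 ≤ x + x ^ 2 by positivity)
  rw [show -x - x ^ 2 = -(x + x ^ 2) by ring, exp_neg, inv_le_iff_one_le_mul₀ (exp_pos _)]
  nlinarith [mul_le_mul_of_nonneg_left hquad (show 0 ≤ 1 - x by linarith)]

lemma exp_neg_mul_mul_le_one_sub_pow (h0 : 0 ≤ x) (h1 : x ≤ 1 / 2) :
    exp (-(n * x)) * (1 - n * x ^ 2) ≤ (1 - x) ^ n := calc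
  exp (-(n * x)) * (1 - n * x ^ 2) ≤ exp (-(n * x)) * exp (-(n * x ^ 2)) := by
    gcongr; linarith [add_one_le_exp (-(n * x ^ 2))]
  _ = exp (-x - x ^ 2) ^ n := by rw [← exp_add, ← exp_nat_mul]; ring_nf
  _ ≤ (1 - x) ^ n := by gcongr; exact exp_neg_sub_sq_le_one_sub h0 h1

lemma natCast_mul_pow_pred_mul_sub_le_pow_sub_pow {a b : ℝ} (hb : 0 ≤ b) (hab : b ≤ a)
    (n : ℕ) :
    n * b ^ (n - 1) * (a - b) ≤ a ^ n - b ^ n := by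
  rw [← geom_sum₂_mul]
  gcongr ?_ * _
  have hterm (i) (hi : i ∈ range n) : b ^ (n - 1) ≤ a ^ i * b ^ (n - 1 - i) := by
    have hsplit : n - 1 = i + (n - 1 - i) := by have := mem_range.1 hi; omega
    rw [hsplit, pow_add, Nat.add_sub_cancel_left]
    gcongr
  simpa using card_nsmul_le_sum _ _ _ hterm

lemma pow_sub_pow_le_natCast_mul_pow_pred_mul_sub {a b : ℝ} (hb : 0 ≤ b) (hab : b ≤ a)
    (n : ℕ) :
    a ^ n - b ^ n ≤ n * a ^ (n - 1) * (a - b) := by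
  have h := abs_pow_sub_pow_le a b n
  rw [abs_of_nonneg (sub_nonneg.2 hab), abs_of_nonneg hb, abs_of_nonneg (hb.trans hab),
    max_eq_left hab] at h
  linarith [le_abs_self (a ^ n - b ^ n)]

variable {p : ℝ}

lemma natCast_mul_sq_mul_pow_le_sq_pow_sub_pow (hp0 : 0 ≤ p) (hp : p ≤ 1 / 2) :
    n * p ^ 2 * (1 - 2 * p) ^ n ≤ ((1 - p) ^ 2) ^ n - (1 - 2 * p) ^ n := calc
  n * p ^ 2 * (1 - 2 * p) ^ n ≤ n * p ^ 2 * (1 - 2 * p) ^ (n - 1) :=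
    mul_le_mul_of_nonneg_left
      (pow_le_pow_of_le_one (by linarith) (by linarith) (n.sub_le 1)) (by positivity)
  _ = n * (1 - 2 * p) ^ (n - 1) * ((1 - p) ^ 2 - (1 - 2 * p)) := by ring
  _ ≤ ((1 - p) ^ 2) ^ n - (1 - 2 * p) ^ n :=
    natCast_mul_pow_pred_mul_sub_le_pow_sub_pow (by linarith) (by nlinarith) n

lemma sq_pow_sub_pow_le (hp0 : 0 ≤ p) (hp : p ≤ 1 / 4) :
    ((1 - p) ^ 2) ^ n - (1 - 2 * p) ^ n ≤ n * p ^ 2 * ((1 + 4 * p) * exp (-2 * (n * p))) := by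
  obtain _ | m := n
  · simp
  have hsq : (1 - p) ^ 2 ≤ exp (-2 * p) := by
    simpa [neg_mul] using one_sub_pow_le_exp_neg_mul (n := 2) (x := p) (by linarith)
  have hpow : ((1 - p) ^ 2) ^ m ≤ (1 + 4 * p) * exp (-2 * ((m + 1 : ℕ) * p)) := calc
    ((1 - p) ^ 2) ^ m ≤ ((1 - p) ^ 2) ^ m * ((1 - p) ^ 2 * (1 + 4 * p)) := by
      refine le_mul_of_one_le_right (by positivity) ?_
      nlinarith [mul_nonneg hp0 (sub_nonneg.2 hp), pow_nonneg hp0 3]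
    _ = ((1 - p) ^ 2) ^ (m + 1) * (1 + 4 * p) := by ring
    _ ≤ exp (-2 * p) ^ (m + 1) * (1 + 4 * p) := by gcongr
    _ = (1 + 4 * p) * exp (-2 * ((m + 1 : ℕ) * p)) := by rw [← exp_nat_mul]; push_cast; ring_nf
  calc ((1 - p) ^ 2) ^ (m + 1) - (1 - 2 * p) ^ (m + 1)
      ≤ (m + 1 : ℕ) * ((1 - p) ^ 2) ^ m * ((1 - p) ^ 2 - (1 - 2 * p)) :=
        pow_sub_pow_le_natCast_mul_pow_pred_mul_sub (by linarith) (by nlinarith) (m + 1)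
    _ = (m + 1 : ℕ) * p ^ 2 * ((1 - p) ^ 2) ^ m := by ring
    _ ≤ _ := by gcongr

lemma emptyProportionVar_sub_approx_bounds (hp0 : 0 ≤ p) (hp : p ≤ 1 / 4) :
    -(5 * n * p ^ 3 * exp (-(n * p))) ≤ emptyProportionVar n p - emptyProportionVarApprox n p ∧
      emptyProportionVar n p - emptyProportionVarApprox n p ≤
        4 * n * p ^ 3 * (1 + n * p) * exp (-2 * (n * p)) := by
  set E := exp (-(n * p))
  set F := exp (-2 * (n * p))
  set u : ℝ := n * p ^ 2
  have hone : E * (1 - u) ≤ (1 - p) ^ n ∧ (1 - p) ^ n ≤ E :=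
    ⟨exp_neg_mul_mul_le_one_sub_pow hp0 (by linarith), one_sub_pow_le_exp_neg_mul (by linarith)⟩
  have htwo : F * (1 - 4 * u) ≤ (1 - 2 * p) ^ n ∧ (1 - 2 * p) ^ n ≤ F := by
    have hF : F = exp (-(n * (2 * p))) := by simp only [F]; ring_nf
    rw [hF]
    refine ⟨?_, one_sub_pow_le_exp_neg_mul (by linarith)⟩
    convert exp_neg_mul_mul_le_one_sub_pow (n := n) (x := 2 * p) (by linarith) (by linarith)
      using 2
    ring
  have hcov_ge := natCast_mul_sq_mul_pow_le_sq_pow_sub_pow (n := n) hp0 (by linarith)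
  have hcov_le := sq_pow_sub_pow_le (n := n) hp0 hp
  have hFE : F ≤ E := exp_le_exp.2 (by nlinarith [n.cast_nonneg (α := ℝ)])
  have hD : emptyProportionVar n p - emptyProportionVarApprox n p =
      p * ((1 - p) ^ n - E) + p * (F - (1 - 2 * p) ^ n) +
        (u * F - (((1 - p) ^ 2) ^ n - (1 - 2 * p) ^ n)) := by
    simp only [emptyProportionVar, emptyProportionVarApprox, ← pow_mul, mul_comm 2 n]; ring
  rw [hD]
  have hu : 0 ≤ u := by positivity
  constructor
  · nlinarith [mul_le_mul_of_nonneg_left hone.1 hp0, mul_le_mul_of_nonneg_left htwo.2 hp0,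
      mul_le_mul_of_nonneg_left hFE (mul_nonneg hp0 hu)]
  · nlinarith [mul_le_mul_of_nonneg_left hone.2 hp0, mul_le_mul_of_nonneg_left htwo.1 hp0,
      mul_le_mul_of_nonneg_left htwo.1 hu]

lemma cube_mul_exp_neg_le {x : ℝ} (hx : 0 ≤ x) : x ^ 3 * exp (-x) ≤ 12 / 5 := by
  have h := sum_le_exp_of_nonneg hx 5
  norm_num [Finset.sum_range_succ, Nat.factorial] at h
  rw [exp_neg, ← div_eq_mul_inv, div_le_iff₀ (exp_pos x)]
  nlinarith [mul_nonneg (sq_nonneg x) (sq_nonneg (x - 3)), sq_nonneg x]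

lemma cube_mul_one_add_mul_exp_neg_two_mul_le {x : ℝ} (hx : 0 ≤ x) :
    x ^ 3 * (1 + x) * exp (-2 * x) ≤ 2 := by
  have h := sum_le_exp_of_nonneg (show 0 ≤ 2 * x by linarith) 5
  norm_num [Finset.sum_range_succ, Nat.factorial] at h
  rw [neg_mul, exp_neg, ← div_eq_mul_inv, div_le_iff₀ (exp_pos _)]
  nlinarith [pow_nonneg hx 3, pow_nonneg hx 4]

end PoissonApproximation

theorem stmt_18 (N n : ℕ) (hN : 4 ≤ N) (hn : 1 ≤ n) (α : ℝ) (hα : α = (n : ℝ) / (N : ℝ)) :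
    -(α ^ 2 + 11 * α + 12) / (n : ℝ) ^ 2 ≤
        allocVar N n (fun _ => 1 / (N : ℝ)) (fun ω => (NhatBoxes ω 0 : ℝ) / (N : ℝ)) -
          (α * Real.exp (-α) - α * Real.exp (-2 * α) - α ^ 2 * Real.exp (-2 * α)) / (n : ℝ) ∧
      allocVar N n (fun _ => 1 / (N : ℝ)) (fun ω => (NhatBoxes ω 0 : ℝ) / (N : ℝ)) -
          (α * Real.exp (-α) - α * Real.exp (-2 * α) - α ^ 2 * Real.exp (-2 * α)) / (n : ℝ)
        ≤ 8 / (n : ℝ) ^ 2 := by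
  have hn0 : (0 : ℝ) < n := by exact_mod_cast hn
  set p : ℝ := 1 / N with hp_def
  have hp0 : 0 ≤ p := by positivity
  have hp : p ≤ 1 / 4 := one_div_le_one_div_of_le (by norm_num) (by exact_mod_cast hN)
  obtain rfl : α = n * p := by rw [hα, hp_def, mul_one_div]
  have happrox : (n * p * Real.exp (-(n * p)) - n * p * Real.exp (-2 * (n * p)) -
      (n * p) ^ 2 * Real.exp (-2 * (n * p))) / n = emptyProportionVarApprox n p := by
    rw [emptyProportionVarApprox]
    field_simp
  rw [allocVar_emptyProportion (by omega), ← hp_def, happrox]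
  obtain ⟨hlo, hhi⟩ := emptyProportionVar_sub_approx_bounds (n := n) hp0 hp
  have hα0 : 0 ≤ (n : ℝ) * p := by positivity
  have hcube := cube_mul_exp_neg_le hα0
  have hcube' := cube_mul_one_add_mul_exp_neg_two_mul_le hα0
  constructor
  · rw [div_le_iff₀ (by positivity)]
    linarith [mul_le_mul_of_nonneg_right hlo (sq_nonneg (n : ℝ)), sq_nonneg ((n : ℝ) * p), hα0]
  · rw [le_div_iff₀ (by positivity)]
    linarith [mul_le_mul_of_nonneg_right hhi (sq_nonneg (n : ℝ))]
end
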